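/- Let B > 0 and C > 0. Let (h_n) be a sequence of positive reals and suppose n·h_n → ∞ as n → ∞. Let (f_n) satisfy 0 ≤ f_n ≤ B and h_n·f_n ≤ 1 for all n, set p_n = h_n·f_n, and let σ_n ≥ C·h_n > 0, with arbitrary μ_n, x_n ∈ ℝ. Then the variance term (p_n·(1 − p_n)/n) · g(x_n; μ_n, σ_n)² → 0 as n → ∞. -/

import Mathlib

open Real Filter

/-- One-dimensional Gaussian density. -/
noncomputable def gauss1 (z μ σ : ℝ) : ℝ :=
  (Real.sqrt (2 * Real.pi * σ ^ 2))⁻¹ * Real.exp (-((z - μ) ^ 2) / (2 * σ ^ 2))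

/-- Conclusion of Lemma 2: if `n·h_n → ∞`, the densities `f_n` are bounded with
`h_n f_n ≤ 1`, and the bandwidths satisfy `σ_n ≥ C h_n > 0`, then the variance term
`(p_n (1 - p_n)/n) g(x_n; μ_n, σ_n)²` with `p_n = h_n f_n` tends to `0`. -/
theorem variance_tendsto_zero
    (B C : ℝ) (hB : 0 < B) (hC : 0 < C)
    (h : ℕ → ℝ) (hh_pos : ∀ n : ℕ, 0 < h n)
    (hnh : Filter.Tendsto (fun n : ℕ => (n : ℝ) * h n) Filter.atTop Filter.atTop)
    (f : ℕ → ℝ) (hf_nonneg : ∀ n : ℕ, 0 ≤ f n) (hf_le : ∀ n : ℕ, f n ≤ B)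
    (hhf : ∀ n : ℕ, h n * f n ≤ 1)
    (σ : ℕ → ℝ) (hσ : ∀ n : ℕ, C * h n ≤ σ n)
    (μ x : ℕ → ℝ) :
    Filter.Tendsto
      (fun n : ℕ => ((h n * f n) * (1 - h n * f n) / (n : ℝ)) *
        (gauss1 (x n) (μ n) (σ n)) ^ 2)
      Filter.atTop (nhds 0) := by
  have hπ := Real.pi_pos
  -- the majorant tends to 0
  have hmaj : Tendsto (fun n : ℕ => (B / (2 * Real.pi * C ^ 2)) * ((n : ℝ) * h n)⁻¹)
      atTop (nhds 0) := by
    have := (hnh.inv_tendsto_atTop).const_mul (B / (2 * Real.pi * C ^ 2))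
    simpa using this
  apply squeeze_zero' ?_ ?_ hmaj
  · filter_upwards with n
    have hp0 : 0 ≤ h n * f n := mul_nonneg (hh_pos n).le (hf_nonneg n)
    have hp1 : h n * f n ≤ 1 := hhf n
    have hg0 : 0 ≤ gauss1 (x n) (μ n) (σ n) ^ 2 := sq_nonneg _
    have : 0 ≤ (h n * f n) * (1 - h n * f n) / (n : ℝ) := by
      apply div_nonneg (mul_nonneg hp0 (by linarith)) (Nat.cast_nonneg n)
    exact mul_nonneg this hg0
  · filter_upwards [eventually_ge_atTop 1] with n hn
    have hh := hh_pos n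
    have hσn : 0 < σ n := lt_of_lt_of_le (by positivity) (hσ n)
    have hn' : (0 : ℝ) < n := by exact_mod_cast Nat.lt_of_lt_of_le Nat.zero_lt_one hn
    have hp0 : 0 ≤ h n * f n := mul_nonneg hh.le (hf_nonneg n)
    have hp1 : h n * f n ≤ 1 := hhf n
    -- bound on gaussian squared
    have hg0 : 0 ≤ gauss1 (x n) (μ n) (σ n) := by
      unfold gauss1; positivity
    have hg1 : gauss1 (x n) (μ n) (σ n) ≤ (Real.sqrt (2 * Real.pi * (σ n) ^ 2))⁻¹ := by
      unfold gauss1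
      have hexp : Real.exp (-((x n - μ n) ^ 2) / (2 * (σ n) ^ 2)) ≤ 1 := by
        rw [Real.exp_le_one_iff]
        apply div_nonpos_of_nonpos_of_nonneg (neg_nonpos.mpr (sq_nonneg _)) (by positivity)
      have hinv : 0 ≤ (Real.sqrt (2 * Real.pi * (σ n) ^ 2))⁻¹ := by positivity
      nlinarith
    have hg2 : gauss1 (x n) (μ n) (σ n) ^ 2 ≤ (2 * Real.pi * (σ n) ^ 2)⁻¹ := by
      calc gauss1 (x n) (μ n) (σ n) ^ 2
          ≤ ((Real.sqrt (2 * Real.pi * (σ n) ^ 2))⁻¹) ^ 2 := by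
            exact pow_le_pow_left₀ hg0 hg1 2
        _ = (2 * Real.pi * (σ n) ^ 2)⁻¹ := by
            rw [inv_pow, Real.sq_sqrt (by positivity)]
    have hg3 : (2 * Real.pi * (σ n) ^ 2)⁻¹ ≤ (2 * Real.pi * (C * h n) ^ 2)⁻¹ := by
      apply inv_anti₀ (by positivity)
      have : (C * h n) ^ 2 ≤ (σ n) ^ 2 := by
        apply pow_le_pow_left₀ (by positivity) (hσ n)
      nlinarith
    have hgsq : gauss1 (x n) (μ n) (σ n) ^ 2 ≤ (2 * Real.pi * (C * h n) ^ 2)⁻¹ :=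
      le_trans hg2 hg3
    have hgsq0 : 0 ≤ gauss1 (x n) (μ n) (σ n) ^ 2 := sq_nonneg _
    -- bound on the p part
    have hpart : (h n * f n) * (1 - h n * f n) / (n : ℝ) ≤ h n * B / (n : ℝ) := by
      have h1 : (h n * f n) * (1 - h n * f n) ≤ h n * f n := by nlinarith
      have h2 : h n * f n ≤ h n * B := mul_le_mul_of_nonneg_left (hf_le n) hh.le
      exact div_le_div_of_nonneg_right (by linarith) hn'.le
    have hpart0 : 0 ≤ (h n * f n) * (1 - h n * f n) / (n : ℝ) :=
      div_nonneg (mul_nonneg hp0 (by linarith)) hn'.le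
    calc ((h n * f n) * (1 - h n * f n) / (n : ℝ)) * gauss1 (x n) (μ n) (σ n) ^ 2
        ≤ (h n * B / (n : ℝ)) * (2 * Real.pi * (C * h n) ^ 2)⁻¹ := by
          apply mul_le_mul hpart hgsq hgsq0 (by positivity)
      _ = (B / (2 * Real.pi * C ^ 2)) * ((n : ℝ) * h n)⁻¹ := by
          field_simp
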